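/- Let Σ be a projective structure on a surface whose holonomy representation ρ : π₁(Σ) → PSL₂(ℂ) is trivial, with developing map D : Σ̃ → Ĉ. Then every projective map φ : U → Σ from a round disk U ⊂ Ĉ is an embedding. -/
import Mathlib

/-- For a projective structure with trivial holonomy, every round disk is embedded:
if the developing map `D : Σ̃ → Ĉ` (with `Ĉ` the Riemann sphere `OnePoint ℂ`) is
equivariant for the trivial holonomy representation `ρ : Γ → PSL₂(ℂ)`, and a
projective map `φ : U → Σ` from a round disk `U ⊆ Ĉ` has a lift `φlift` to the
universal cover with `D ∘ φlift` the restriction of a Möbius transformation `g`,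
then `φ` is an embedding (injective). -/
theorem round_disk_embedded {Surf Cover Γ : Type*} [Group Γ] [MulAction Γ Cover]
    (π : Cover → Surf) (hdeck : ∀ x y : Cover, π x = π y ↔ ∃ γ : Γ, γ • x = y)
    (D : Cover → OnePoint ℂ) (ρ : Γ →* Equiv.Perm (OnePoint ℂ))
    (hequiv : ∀ (γ : Γ) (s : Cover), D (γ • s) = ρ γ (D s))
    (htriv : ρ = 1)
    (U : Set (OnePoint ℂ)) (φ : U → Surf) (φlift : U → Cover)
    (hlift : ∀ u : U, φ u = π (φlift u))
    (g : Equiv.Perm (OnePoint ℂ)) (hproj : ∀ u : U, D (φlift u) = g (u : OnePoint ℂ)) :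
    Function.Injective φ := by
  intro u v huv
  rw [hlift u, hlift v, hdeck] at huv
  obtain ⟨γ, hγ⟩ := huv
  have : D (φlift v) = D (φlift u) := by
    rw [← hγ, hequiv, htriv]; rfl
  rw [hproj, hproj] at this
  exact Subtype.ext ((g.injective this).symm)
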